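/- Let f ∈ K[X] split over K with distinct roots u₁, ..., uₙ where n ≥ 2, and let 0 ≤ k ≤ n - 2. Then Σᵢ uᵢᵏ / f'(uᵢ) = 0. -/

import Mathlib

/-!
Write `f = c ∏ (X - uᵢ)`, so that `f'(uᵢ) = c ∏_{j ≠ i} (uᵢ - uⱼ)`. Lagrange interpolation of
`Xᵏ` at the `n` distinct roots reproduces `Xᵏ` (its degree is below `n`), and comparing the
coefficients of `Xⁿ⁻¹` gives `∑ uᵢᵏ / ∏_{j ≠ i} (uᵢ - uⱼ) = 0` as soon as `k ≠ n - 1`.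
-/

open Polynomial Lagrange Finset

theorem Lagrange.sum_pow_div_prod_sub_eq_zero {F ι : Type*} [Field F] [DecidableEq ι]
    {s : Finset ι} {v : ι → F} (hvs : Set.InjOn v s) {k : ℕ} (hk : k + 1 < #s) :
    ∑ i ∈ s, v i ^ k / ∏ j ∈ s.erase i, (v i - v j) = 0 := by
  have hdeg : ((X : F[X]) ^ k).degree < #s := by
    rw [degree_X_pow]
    exact_mod_cast (Nat.lt_succ_self k).trans hk
  simpa [coeff_X_pow, show #s - 1 ≠ k by omega] using (coeff_eq_sum hvs hdeg).symm

namespace Polynomial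

variable {K : Type*} [Field K] [DecidableEq K] {f : K[X]}

theorem Splits.eq_C_leadingCoeff_mul_nodal (hf : f.Splits) (hnd : f.roots.Nodup) :
    f = C f.leadingCoeff * nodal f.roots.toFinset id := by
  conv_lhs => rw [hf.eq_prod_roots]
  rw [nodal_eq, Finset.prod_eq_multiset_prod, Multiset.toFinset_val, hnd.dedup]
  rfl

theorem Splits.eval_derivative_of_mem_roots (hf : f.Splits) (hnd : f.roots.Nodup) {u : K}
    (hu : u ∈ f.roots) :
    f.derivative.eval u = f.leadingCoeff * ∏ v ∈ f.roots.toFinset.erase u, (u - v) := by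
  conv_lhs => rw [hf.eq_C_leadingCoeff_mul_nodal hnd]
  rw [derivative_C_mul, eval_C_mul]
  congr 1
  exact (eval_nodal_derivative_eval_node_eq (v := id) (Multiset.mem_toFinset.mpr hu)).trans
    eval_nodal

end Polynomial

theorem power_sum_over_derivative_eq_zero {K : Type*} [Field K] [DecidableEq K]
    (f : K[X]) (hsep : f.Separable) (hsplit : (f.map (RingHom.id K)).Splits)
    (hdeg : 2 ≤ f.natDegree) (k : ℕ) (hk : k ≤ f.natDegree - 2) :
    ∑ u ∈ f.roots.toFinset, u ^ k / f.derivative.eval u = 0 := by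
  have hf : f.Splits := by simpa using hsplit
  have hnd : f.roots.Nodup := nodup_roots hsep
  have hcard : #f.roots.toFinset = f.natDegree := by
    rw [Multiset.toFinset_card_of_nodup hnd, ← hf.natDegree_eq_card_roots]
  calc ∑ u ∈ f.roots.toFinset, u ^ k / f.derivative.eval u
      = f.leadingCoeff⁻¹ *
          ∑ u ∈ f.roots.toFinset, u ^ k / ∏ v ∈ f.roots.toFinset.erase u, (u - v) := by
        rw [mul_sum]
        refine sum_congr rfl fun u hu => ?_
        rw [hf.eval_derivative_of_mem_roots hnd (Multiset.mem_toFinset.mp hu), div_mul_eq_div_div,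
          div_eq_inv_mul _ f.leadingCoeff, mul_div_assoc]
    _ = 0 := mul_eq_zero_of_right _ <|
        sum_pow_div_prod_sub_eq_zero (v := id) (Set.injOn_id _) (by omega)
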